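/- Soundness of the full proof system: for any Kripke structure M, state s, tag U, and CTL⁻ formula φ, if the sequent M, s ⊢_U φ is derivable by the proof rules, then s ∈ ⟦φ⟧_U. -/
import Mathlib


inductive Formula (Atom : Type*) where
  | atom : Atom → Formula Atom
  | natom : Atom → Formula Atom
  | and : Formula Atom → Formula Atom → Formula Atom
  | or : Formula Atom → Formula Atom → Formula Atom
  | ex : Formula Atom → Formula Atom
  | ax : Formula Atom → Formula Atom
  | ef : Formula Atom → Formula Atom
  | af : Formula Atom → Formula Atom
  | eg : Formula Atom → Formula Atom
  | ag : Formula Atom → Formula Atom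

structure Kripke (Atom S : Type*) where
  rel : S → S → Prop
  label : S → Set Atom

variable {Atom S : Type*}

def lfp (f : Set S → Set S) : Set S := ⋂₀ {X | f X ⊆ X}
def gfp (f : Set S → Set S) : Set S := ⋃₀ {X | X ⊆ f X}
def preE (r : S → S → Prop) (Y : Set S) : Set S := {s | ∃ s' ∈ Y, r s s'}
def preA (r : S → S → Prop) (Y : Set S) : Set S := {s | ∀ s', r s s' → s' ∈ Y}

def sem (M : Kripke Atom S) : Formula Atom → Set S → Set S
  | .atom p, _ => {s | p ∈ M.label s}
  | .natom p, _ => {s | p ∉ M.label s}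
  | .and φ ψ, _ => sem M φ ∅ ∩ sem M ψ ∅
  | .or φ ψ, _ => sem M φ ∅ ∪ sem M ψ ∅
  | .ex φ, _ => preE M.rel (sem M φ ∅)
  | .ax φ, _ => preA M.rel (sem M φ ∅)
  | .ef φ, U => lfp (fun Y => (sem M φ ∅ ∪ preE M.rel Y) \ U)
  | .af φ, U => lfp (fun Y => (sem M φ ∅ ∪ preA M.rel Y) \ U)
  | .eg φ, U => gfp (fun Y => sem M φ ∅ ∩ preE M.rel Y ∪ U)
  | .ag φ, U => gfp (fun Y => sem M φ ∅ ∩ preA M.rel Y ∪ U)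

inductive Derives (M : Kripke Atom S) : S → Set S → Formula Atom → Prop where
  | atom {s p} : p ∈ M.label s → Derives M s ∅ (.atom p)
  | natom {s p} : p ∉ M.label s → Derives M s ∅ (.natom p)
  | and {s φ ψ} : Derives M s ∅ φ → Derives M s ∅ ψ → Derives M s ∅ (.and φ ψ)
  | or₁ {s φ ψ} : Derives M s ∅ φ → Derives M s ∅ (.or φ ψ)
  | or₂ {s φ ψ} : Derives M s ∅ ψ → Derives M s ∅ (.or φ ψ)
  | ex {s s' φ} : M.rel s s' → Derives M s' ∅ φ → Derives M s ∅ (.ex φ)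
  | ax {s φ} : (∀ s', M.rel s s' → Derives M s' ∅ φ) → Derives M s ∅ (.ax φ)
  | eg₁ {s U φ} : s ∈ U → Derives M s U (.eg φ)
  | eg₂ {s s' U φ} : s ∉ U → Derives M s ∅ φ → M.rel s s' →
      Derives M s' (U ∪ {s}) (.eg φ) → Derives M s U (.eg φ)
  | ag₁ {s U φ} : s ∈ U → Derives M s U (.ag φ)
  | ag₂ {s U φ} : s ∉ U → Derives M s ∅ φ →
      (∀ s', M.rel s s' → Derives M s' (U ∪ {s}) (.ag φ)) → Derives M s U (.ag φ)
  | ef₁ {s U φ} : s ∉ U → Derives M s ∅ φ → Derives M s U (.ef φ)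
  | ef₂ {s s' U φ} : s ∉ U → M.rel s s' → Derives M s' (U ∪ {s}) (.ef φ) →
      Derives M s U (.ef φ)
  | af₁ {s U φ} : s ∉ U → Derives M s ∅ φ → Derives M s U (.af φ)
  | af₂ {s U φ} : s ∉ U → (∀ s', M.rel s s' → Derives M s' (U ∪ {s}) (.af φ)) →
      Derives M s U (.af φ)

lemma lfp_le {f : Set S → Set S} {X : Set S} (h : f X ⊆ X) : lfp f ⊆ X :=
  Set.sInter_subset_of_mem h

lemma f_lfp_le {f : Set S → Set S} (mono : ∀ X Y, X ⊆ Y → f X ⊆ f Y) :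
    f (lfp f) ⊆ lfp f := by
  intro x hx
  refine Set.mem_sInter.2 fun X hX => ?_
  exact hX (mono _ _ (lfp_le hX) hx)

lemma lfp_mono_fun {f g : Set S → Set S} (h : ∀ X, f X ⊆ g X) : lfp f ⊆ lfp g := by
  apply Set.sInter_subset_sInter
  intro X hX
  exact (h X).trans hX

lemma le_gfp {f : Set S → Set S} {X : Set S} (h : X ⊆ f X) : X ⊆ gfp f :=
  Set.subset_sUnion_of_mem h

theorem soundness (M : Kripke Atom S) (s : S) (U : Set S) (φ : Formula Atom)
    (h : Derives M s U φ) : s ∈ sem M φ U := by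
  induction h with
  | atom hp => exact hp
  | natom hp => exact hp
  | and _ _ ih1 ih2 => exact ⟨ih1, ih2⟩
  | or₁ _ ih => exact Or.inl ih
  | or₂ _ ih => exact Or.inr ih
  | ex hr _ ih => exact ⟨_, ih, hr⟩
  | ax _ ih => exact fun s' hr => ih s' hr
  | eg₁ hU => exact le_gfp (fun x hx => Or.inr hx) hU
  | ag₁ hU => exact le_gfp (fun x hx => Or.inr hx) hU
  | @eg₂ s s' U φ hU _ hr _ ihφ ih =>
    -- ν reduction: (gfp for tag U∪{s}) ∪ {s} is a post-fixed point for tag U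
    set A := sem M φ ∅
    set V : Set S := gfp (fun Y => A ∩ preE M.rel Y ∪ (U ∪ {s}))
    have hsA : s ∈ A := ihφ
    have hs'V : s' ∈ V := ih
    have hpost : V ∪ {s} ⊆ (fun Y => A ∩ preE M.rel Y ∪ U) (V ∪ {s}) := by
      intro x hx
      rcases hx with hxV | hxs
      · rcases Set.mem_sUnion.1 hxV with ⟨X, hX, hxX⟩
        rcases hX hxX with ⟨hA, y, hyX, hrx⟩ | hU'
        · exact Or.inl ⟨hA, y, Or.inl (le_gfp hX hyX), hrx⟩
        · rcases hU' with hU' | rfl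
          · exact Or.inr hU'
          · exact Or.inl ⟨hsA, s', Or.inl hs'V, hr⟩
      · obtain rfl := hxs
        exact Or.inl ⟨hsA, s', Or.inl hs'V, hr⟩
    exact le_gfp hpost (Or.inr rfl)
  | @ag₂ s U φ hU _ _ ihφ ih =>
    set A := sem M φ ∅
    set V : Set S := gfp (fun Y => A ∩ preA M.rel Y ∪ (U ∪ {s}))
    have hsA : s ∈ A := ihφ
    have hsucc : ∀ s', M.rel s s' → s' ∈ V := ih
    have hpost : V ∪ {s} ⊆ (fun Y => A ∩ preA M.rel Y ∪ U) (V ∪ {s}) := by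
      intro x hx
      rcases hx with hxV | hxs
      · rcases Set.mem_sUnion.1 hxV with ⟨X, hX, hxX⟩
        rcases hX hxX with ⟨hA, hpa⟩ | hU'
        · exact Or.inl ⟨hA, fun y hry => Or.inl (le_gfp hX (hpa y hry))⟩
        · rcases hU' with hU' | rfl
          · exact Or.inr hU'
          · exact Or.inl ⟨hsA, fun y hry => Or.inl (hsucc y hry)⟩
      · obtain rfl := hxs
        exact Or.inl ⟨hsA, fun y hry => Or.inl (hsucc y hry)⟩
    exact le_gfp hpost (Or.inr rfl)
  | @ef₁ s U φ hU _ ih =>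
    exact f_lfp_le (f := fun Y => (sem M φ ∅ ∪ preE M.rel Y) \ U) (fun X Y hXY x hx =>
      ⟨Or.imp_right (fun ⟨y, hy, hr⟩ => ⟨y, hXY hy, hr⟩) hx.1, hx.2⟩)
      ⟨Or.inl ih, hU⟩
  | @ef₂ s s' U φ hU hr _ ih =>
    have mono : ∀ X Y : Set S, X ⊆ Y →
        (sem M φ ∅ ∪ preE M.rel X) \ U ⊆ (sem M φ ∅ ∪ preE M.rel Y) \ U :=
      fun X Y hXY x hx =>
        ⟨Or.imp_right (fun ⟨y, hy, hr'⟩ => ⟨y, hXY hy, hr'⟩) hx.1, hx.2⟩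
    have hsub : sem M (.ef φ) (U ∪ {s}) ⊆ sem M (.ef φ) U :=
      lfp_mono_fun (fun X x hx => ⟨hx.1, fun h => hx.2 (Or.inl h)⟩)
    exact f_lfp_le mono ⟨Or.inr ⟨s', hsub ih, hr⟩, hU⟩
  | @af₁ s U φ hU _ ih =>
    exact f_lfp_le (f := fun Y => (sem M φ ∅ ∪ preA M.rel Y) \ U) (fun X Y hXY x hx =>
      ⟨Or.imp_right (fun hpa y hry => hXY (hpa y hry)) hx.1, hx.2⟩)
      ⟨Or.inl ih, hU⟩
  | @af₂ s U φ hU _ ih =>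
    have mono : ∀ X Y : Set S, X ⊆ Y →
        (sem M φ ∅ ∪ preA M.rel X) \ U ⊆ (sem M φ ∅ ∪ preA M.rel Y) \ U :=
      fun X Y hXY x hx =>
        ⟨Or.imp_right (fun hpa y hry => hXY (hpa y hry)) hx.1, hx.2⟩
    have hsub : sem M (.af φ) (U ∪ {s}) ⊆ sem M (.af φ) U :=
      lfp_mono_fun (fun X x hx => ⟨hx.1, fun h => hx.2 (Or.inl h)⟩)
    exact f_lfp_le mono ⟨Or.inr (fun s' hr => hsub (ih s' hr)), hU⟩
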